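/- arXiv:1710.07093 — 5 statements merged into one kernel-verified Lean document; each statement's English description precedes it below -/
import Mathlib

section
/- For any commutative ring R, the element u − v (the difference of the two variables) is a nonzerodivisor in the two-variable formal power series ring R⟦u,v⟧. -/
/-! If `φ * (X i - X j) = 0` then `φ * X i ^ n = φ * X j ^ n` for every `n`. The coefficient of
`φ * X i ^ n` at `d + n • eᵢ` is the coefficient of `φ` at `d`, while `φ * X j ^ n` is divisible
by `X j ^ n` and so has no monomial of `X j`-degree below `n`; taking `n = d j + 1` gives
`coeff d φ = 0`. -/

open Finsupp nonZeroDivisors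

theorem mul_pow_eq_mul_pow_of_mul_eq_mul {M : Type*} [Monoid M] {a b c : M} (hab : Commute a b)
    (h : c * a = c * b) (n : ℕ) : c * a ^ n = c * b ^ n := by
  induction n with
  | zero => simp
  | succ n ih =>
    calc c * a ^ (n + 1) = c * a * a ^ n := by rw [pow_succ', mul_assoc]
      _ = c * a ^ n * b := by rw [h, mul_assoc, (hab.symm.pow_right n).eq, ← mul_assoc]
      _ = c * b ^ (n + 1) := by rw [ih, pow_succ, mul_assoc]

namespace MvPowerSeries

variable {σ R : Type*}

theorem coeff_add_single_mul_X_pow [Semiring R] (φ : MvPowerSeries σ R) (d : σ →₀ ℕ) (s : σ)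
    (n : ℕ) : coeff (d + single s n) (φ * X s ^ n) = coeff d φ := by
  rw [X_pow_eq, coeff_add_mul_monomial, mul_one]

theorem eq_zero_of_mul_X_eq_mul_X [Semiring R] {i j : σ} (hij : i ≠ j) {φ : MvPowerSeries σ R}
    (h : φ * X i = φ * X j) : φ = 0 := by
  ext d
  set n := d j + 1
  have hpow : φ * X i ^ n = φ * X j ^ n :=
    mul_pow_eq_mul_pow_of_mul_eq_mul (commute_X (X i) j) h n
  have hdeg : (d + single i n) j < n := by simp [n, hij]
  rw [← coeff_add_single_mul_X_pow φ d i n, hpow, map_zero]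
  exact X_pow_dvd_iff.mp ⟨φ, X_pow_mul.symm⟩ _ hdeg

theorem X_sub_X_mem_nonZeroDivisors [Ring R] {i j : σ} (hij : i ≠ j) :
    X i - X j ∈ (MvPowerSeries σ R)⁰ := by
  have right : ∀ φ : MvPowerSeries σ R, φ * (X i - X j) = 0 → φ = 0 := fun φ hφ ↦
    eq_zero_of_mul_X_eq_mul_X hij (sub_eq_zero.mp (by rwa [← mul_sub]))
  refine ⟨fun φ hφ ↦ right φ ?_, right⟩
  rwa [((commute_X φ i).sub_right (commute_X φ j)).eq]

end MvPowerSeries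

/-- `u - v` is a nonzerodivisor in the two-variable formal power series ring `R⟦u,v⟧`. -/
theorem stmt_2 (R : Type*) [CommRing R] :
    (MvPowerSeries.X 0 - MvPowerSeries.X 1 : MvPowerSeries (Fin 2) R)
      ∈ nonZeroDivisors (MvPowerSeries (Fin 2) R) :=
  MvPowerSeries.X_sub_X_mem_nonZeroDivisors (by decide)
end

section
/- Let R be a commutative ring and G(u,v) ∈ R⟦u,v⟧ a formal power series in two variables. If the one-variable power series G(u,u) ∈ R⟦u⟧ obtained by substituting v := u is zero, then u − v divides G(u,v) in R⟦u,v⟧. -/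
/-!
Write `g(i, j)` for the coefficient of `u^i v^j` in `G`; the hypothesis says that every
antidiagonal sum `∑_{a+b=n} g(a, b)` vanishes. Let `H` be the series whose `(i, j)`-coefficient
is the tail `∑_{a+b=i+j+1, a>i} g(a, b)` of an antidiagonal sum. The `(i, j)`-coefficient of
`(u - v) H` is the difference of two consecutive tails of the `(i + j)`-th antidiagonal, namely
`g(i, j)`; at `i = 0` the first tail is the whole antidiagonal sum, which is `0`.
-/

/-- Substitution of two power series for the two variables of an element of
`R⟦u,v⟧ = MvPowerSeries (Fin 2) R`. -/
noncomputable def subst2 {R : Type*} [CommRing R] {τ : Type*} (a b : MvPowerSeries τ R)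
    (F : MvPowerSeries (Fin 2) R) : MvPowerSeries τ R :=
  fun e => ∑ᶠ d : Fin 2 →₀ ℕ,
    (MvPowerSeries.coeff d F) * (MvPowerSeries.coeff e (a ^ (d 0) * b ^ (d 1)))

section AntidiagonalTail

open Finset

variable {M : Type*} [AddCommMonoid M] (g : ℕ × ℕ → M)

def antidiagonalTail (n i : ℕ) : M :=
  ∑ p ∈ antidiagonal n with i ≤ p.1, g p

theorem antidiagonalTail_zero (n : ℕ) :
    antidiagonalTail g n 0 = ∑ p ∈ antidiagonal n, g p := by
  simp [antidiagonalTail]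

theorem antidiagonalTail_of_lt {n i : ℕ} (h : n < i) : antidiagonalTail g n i = 0 := by
  refine sum_eq_zero fun p hp => ?_
  rw [mem_filter, HasAntidiagonal.mem_antidiagonal] at hp
  omega

theorem antidiagonalTail_eq_add (i j : ℕ) :
    antidiagonalTail g (i + j) i = g (i, j) + antidiagonalTail g (i + j) (i + 1) := by
  have hsplit : {p ∈ antidiagonal (i + j) | i ≤ p.1} =
      insert (i, j) {p ∈ antidiagonal (i + j) | i + 1 ≤ p.1} := by
    ext ⟨a, b⟩
    simp only [mem_filter, HasAntidiagonal.mem_antidiagonal, mem_insert, Prod.mk.injEq]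
    omega
  rw [antidiagonalTail, hsplit, sum_insert (by simp)]
  rfl

end AntidiagonalTail

namespace MvPowerSeries

variable {σ R : Type*} [CommRing R]

theorem coeff_add_single_X_mul [DecidableEq σ] (m : σ →₀ ℕ) (s : σ) (φ : MvPowerSeries σ R) :
    coeff (m + Finsupp.single s 1) (X s * φ) = coeff m φ := by
  rw [add_comm, X, coeff_add_monomial_mul, one_mul]

theorem coeff_X_mul_of_eq_zero {m : σ →₀ ℕ} {s : σ} (h : m s = 0) (φ : MvPowerSeries σ R) :
    coeff m (X s * φ) = 0 := by
  rw [X, coeff_monomial_mul, if_neg]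
  intro hle
  simpa [h] using hle s

end MvPowerSeries

section TwoVariables

open Finset MvPowerSeries

variable {R : Type*} [CommRing R]

noncomputable def coeff₂ (G : MvPowerSeries (Fin 2) R) (p : ℕ × ℕ) : R :=
  coeff ((finTwoArrowEquiv' ℕ).symm p) G

theorem coeff₂_X_zero_mul_zero (φ : MvPowerSeries (Fin 2) R) (j : ℕ) :
    coeff₂ (X 0 * φ) (0, j) = 0 :=
  coeff_X_mul_of_eq_zero (by simp) φ

theorem coeff₂_X_zero_mul_succ (φ : MvPowerSeries (Fin 2) R) (i j : ℕ) :
    coeff₂ (X 0 * φ) (i + 1, j) = coeff₂ φ (i, j) := by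
  have : (finTwoArrowEquiv' ℕ).symm (i + 1, j) =
      (finTwoArrowEquiv' ℕ).symm (i, j) + Finsupp.single 0 1 := by
    rw [Finsupp.ext_iff, Fin.forall_fin_two]; simp
  rw [coeff₂, this, coeff_add_single_X_mul, coeff₂]

theorem coeff₂_X_one_mul_zero (φ : MvPowerSeries (Fin 2) R) (i : ℕ) :
    coeff₂ (X 1 * φ) (i, 0) = 0 :=
  coeff_X_mul_of_eq_zero (by simp) φ

theorem coeff₂_X_one_mul_succ (φ : MvPowerSeries (Fin 2) R) (i j : ℕ) :
    coeff₂ (X 1 * φ) (i, j + 1) = coeff₂ φ (i, j) := by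
  have : (finTwoArrowEquiv' ℕ).symm (i, j + 1) =
      (finTwoArrowEquiv' ℕ).symm (i, j) + Finsupp.single 1 1 := by
    rw [Finsupp.ext_iff, Fin.forall_fin_two]; simp
  rw [coeff₂, this, coeff_add_single_X_mul, coeff₂]

noncomputable def divXSubX (G : MvPowerSeries (Fin 2) R) : MvPowerSeries (Fin 2) R :=
  fun e => antidiagonalTail (coeff₂ G) (e 0 + e 1 + 1) (e 0 + 1)

theorem coeff₂_divXSubX (G : MvPowerSeries (Fin 2) R) (i j : ℕ) :
    coeff₂ (divXSubX G) (i, j) = antidiagonalTail (coeff₂ G) (i + j + 1) (i + 1) := by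
  change antidiagonalTail _ (_ + _ + 1) (_ + 1) = _
  simp

theorem coeff₂_X_zero_mul_divXSubX {G : MvPowerSeries (Fin 2) R}
    (hG : ∀ n, ∑ p ∈ antidiagonal n, coeff₂ G p = 0) (i j : ℕ) :
    coeff₂ (X 0 * divXSubX G) (i, j) = antidiagonalTail (coeff₂ G) (i + j) i := by
  cases i with
  | zero => rw [coeff₂_X_zero_mul_zero, antidiagonalTail_zero, zero_add, hG]
  | succ i => rw [coeff₂_X_zero_mul_succ, coeff₂_divXSubX, add_right_comm]

theorem coeff₂_X_one_mul_divXSubX (G : MvPowerSeries (Fin 2) R) (i j : ℕ) :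
    coeff₂ (X 1 * divXSubX G) (i, j) = antidiagonalTail (coeff₂ G) (i + j) (i + 1) := by
  cases j with
  | zero => rw [coeff₂_X_one_mul_zero, add_zero, antidiagonalTail_of_lt _ i.lt_succ_self]
  | succ j => rw [coeff₂_X_one_mul_succ, coeff₂_divXSubX, add_assoc]

theorem X_zero_sub_X_one_dvd {G : MvPowerSeries (Fin 2) R}
    (hG : ∀ n, ∑ p ∈ antidiagonal n, coeff₂ G p = 0) : X 0 - X 1 ∣ G := by
  refine ⟨divXSubX G, ext fun d => ?_⟩
  obtain ⟨⟨i, j⟩, rfl⟩ := (finTwoArrowEquiv' ℕ).symm.surjective d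
  rw [sub_mul, map_sub]
  change coeff₂ G (i, j) = coeff₂ (X 0 * divXSubX G) (i, j) - coeff₂ (X 1 * divXSubX G) (i, j)
  rw [coeff₂_X_zero_mul_divXSubX hG, coeff₂_X_one_mul_divXSubX,
    antidiagonalTail_eq_add, add_sub_cancel_right]

theorem coeff_subst2_X_X (G : MvPowerSeries (Fin 2) R) (n : ℕ) :
    PowerSeries.coeff n (subst2 PowerSeries.X PowerSeries.X G) =
      ∑ p ∈ antidiagonal n, coeff₂ G p := by
  have hterm : ∀ p : ℕ × ℕ, coeff₂ G p * PowerSeries.coeff n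
      (PowerSeries.X ^ (finTwoArrowEquiv' ℕ).symm p 0 *
        PowerSeries.X ^ (finTwoArrowEquiv' ℕ).symm p 1) =
      (antidiagonal n : Set (ℕ × ℕ)).indicator (coeff₂ G) p := by
    rintro ⟨i, j⟩
    simp [← pow_add, PowerSeries.coeff_X_pow, Set.indicator_apply, eq_comm]
  calc PowerSeries.coeff n (subst2 PowerSeries.X PowerSeries.X G)
      = ∑ᶠ p, (antidiagonal n : Set (ℕ × ℕ)).indicator (coeff₂ G) p := by
        simp_rw [← hterm]
        exact (finsum_comp_equiv (finTwoArrowEquiv' ℕ).symm).symm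
    _ = ∑ p ∈ antidiagonal n, coeff₂ G p := by
        rw [← finsum_mem_def, finsum_mem_coe_finset]

end TwoVariables

/-- If `G(u,u) = 0` in `R⟦u⟧` then `u - v` divides `G(u,v)` in `R⟦u,v⟧`. -/
theorem stmt_3 {R : Type*} [CommRing R] (G : MvPowerSeries (Fin 2) R)
    (hG : subst2 PowerSeries.X PowerSeries.X G = 0) :
    (MvPowerSeries.X 0 - MvPowerSeries.X 1 : MvPowerSeries (Fin 2) R) ∣ G :=
  X_zero_sub_X_one_dvd fun n => by rw [← coeff_subst2_X_X, hG, map_zero]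
end

section
/- Let R be a commutative ring, F a formal group law over R, and χ its formal inverse. Then there exists a unique formal power series P(u,v) ∈ R⟦u,v⟧ such that F(u, χ(v)) = (u − v)·P(u,v) in R⟦u,v⟧, where F(u, χ(v)) denotes the substitution of u and χ(v) for the two variables of F. -/
/-- A (one-dimensional, commutative) formal group law over `R`:
`F(u,0) = u`, `F(0,v) = v`, `F(u,v) = F(v,u)` and `F(F(u,v),w) = F(u,F(v,w))`. -/
def IsFormalGroupLaw {R : Type*} [CommRing R] (F : MvPowerSeries (Fin 2) R) : Prop :=
  subst2 PowerSeries.X 0 F = PowerSeries.X ∧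
  subst2 0 PowerSeries.X F = PowerSeries.X ∧
  subst2 (MvPowerSeries.X 1) (MvPowerSeries.X 0) F = F ∧
  subst2 (subst2 (MvPowerSeries.X (0 : Fin 3)) (MvPowerSeries.X 1) F) (MvPowerSeries.X 2) F
    = subst2 (MvPowerSeries.X (0 : Fin 3)) (subst2 (MvPowerSeries.X 1) (MvPowerSeries.X 2) F) F

/-- Substitution of a power series (with zero constant coefficient) for the variable of a
one-variable formal power series. -/
noncomputable def subst1 {R : Type*} [CommRing R] {τ : Type*} (a : MvPowerSeries τ R)
    (f : PowerSeries R) : MvPowerSeries τ R :=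
  fun e => ∑ᶠ n : ℕ, (PowerSeries.coeff n f) * (MvPowerSeries.coeff e (a ^ n))

/-!
Put `G(u, v) = F(u, χ(v))`. On the diagonal, `G(t, t) = F(t, χ(t)) = 0`. The shear
`H(u, v) ↦ H(u + v, v)` is an automorphism of `R⟦u,v⟧` (with inverse `H(u, v) ↦ H(u - v, v)`)
sending `u - v` to `u`, so divisibility by `u - v` turns into divisibility by `u`, i.e. into the
vanishing of `K(0, v)` for `K(u, v) = G(u + v, v)`; and `K(0, v) = G(v, v) = 0`. Uniqueness holds
because `u`, hence also `u - v`, is a non-zero-divisor.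
-/

section

open MvPowerSeries

theorem MvPowerSeries.eq_zero_of_X_mul_eq_zero {σ S : Type*} [Semiring S] {s : σ}
    {D : MvPowerSeries σ S} (h : X s * D = 0) : D = 0 := by
  ext m
  have := congr(coeff (Finsupp.single s 1 + m) $h)
  rwa [X_def, coeff_add_monomial_mul, one_mul, map_zero] at this

variable {R : Type*} [CommRing R]

theorem subst1_eq_subst {τ : Type*} {a : MvPowerSeries τ R} (ha : constantCoeff a = 0)
    (f : PowerSeries R) : subst1 a f = PowerSeries.subst a f := by
  ext e
  rw [PowerSeries.coeff_subst (PowerSeries.HasSubst.of_constantCoeff_zero ha)]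
  rfl

theorem subst2_eq_subst {τ : Type*} {a b : MvPowerSeries τ R} (ha : constantCoeff a = 0)
    (hb : constantCoeff b = 0) (F : MvPowerSeries (Fin 2) R) :
    subst2 a b F = subst ![a, b] F := by
  ext e
  rw [coeff_subst (hasSubst_of_constantCoeff_zero (Fin.forall_fin_two.2 ⟨ha, hb⟩))]
  refine finsum_congr fun d => ?_
  rw [Finsupp.prod_fintype _ _ (by simp), Fin.prod_univ_two, smul_eq_mul]
  rfl

theorem hasSubst_zero_X : HasSubst (![0, PowerSeries.X] : Fin 2 → PowerSeries R) :=
  HasSubst.zero_X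

theorem coeff_subst_zero_X (K : MvPowerSeries (Fin 2) R) (n : ℕ) :
    PowerSeries.coeff n (subst ![0, PowerSeries.X] K) = coeff (Finsupp.single 1 n) K := by
  rw [PowerSeries.coeff, coeff_subst hasSubst_zero_X, finsum_eq_single _ (Finsupp.single 1 n)]
  · simp
  · intro d hd
    rw [Finsupp.prod_fintype _ _ (by simp), Fin.prod_univ_two, smul_eq_mul]
    rcases eq_or_ne (d 0) 0 with h0 | h0
    · have h1 : d 1 ≠ n := fun h1 => hd (by ext i; fin_cases i <;> simp [h0, h1])
      simp [h0, PowerSeries.coeff_X_pow, h1.symm]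
    · simp [zero_pow h0]

theorem X_zero_dvd_of_subst_zero_X_eq_zero {K : MvPowerSeries (Fin 2) R}
    (hK : subst ![0, PowerSeries.X] K = (0 : PowerSeries R)) : X 0 ∣ K := by
  refine X_dvd_iff.2 fun m hm => ?_
  have hm : m = Finsupp.single 1 (m 1) := by
    ext i; fin_cases i <;> simp [hm]
  rw [hm, ← coeff_subst_zero_X, hK, map_zero]

theorem hasSubst_X_add_X_X : HasSubst (![X 0 + X 1, X 1] : Fin 2 → MvPowerSeries (Fin 2) R) :=
  hasSubst_of_constantCoeff_zero (by simp [Fin.forall_fin_two])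

theorem hasSubst_X_sub_X_X : HasSubst (![X 0 - X 1, X 1] : Fin 2 → MvPowerSeries (Fin 2) R) :=
  hasSubst_of_constantCoeff_zero (by simp [Fin.forall_fin_two])

noncomputable def shear : MvPowerSeries (Fin 2) R →ₐ[R] MvPowerSeries (Fin 2) R :=
  substAlgHom hasSubst_X_add_X_X

noncomputable def shearInv : MvPowerSeries (Fin 2) R →ₐ[R] MvPowerSeries (Fin 2) R :=
  substAlgHom hasSubst_X_sub_X_X

theorem shear_X_sub_X : shear (X 0 - X 1 : MvPowerSeries (Fin 2) R) = X 0 := by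
  rw [shear, map_sub, substAlgHom_X, substAlgHom_X]
  simp

theorem shearInv_X_zero : shearInv (X 0 : MvPowerSeries (Fin 2) R) = X 0 - X 1 := by
  rw [shearInv, substAlgHom_X]
  simp

theorem shearInv_shear (H : MvPowerSeries (Fin 2) R) : shearInv (shear H) = H := by
  rw [shearInv, shear, coe_substAlgHom, coe_substAlgHom,
    subst_comp_subst_apply hasSubst_X_add_X_X hasSubst_X_sub_X_X]
  trans subst (R := R) X H
  · congr 1
    funext s
    fin_cases s <;> simp [subst_add hasSubst_X_sub_X_X, subst_X hasSubst_X_sub_X_X]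
  · exact congrFun subst_self H

theorem subst_zero_X_shear (H : MvPowerSeries (Fin 2) R) :
    subst ![0, PowerSeries.X] (shear H)
      = (subst ![PowerSeries.X, PowerSeries.X] H : PowerSeries R) := by
  rw [shear, coe_substAlgHom, subst_comp_subst_apply hasSubst_X_add_X_X hasSubst_zero_X]
  congr 1
  funext s
  fin_cases s <;> simp [subst_add hasSubst_zero_X, subst_X hasSubst_zero_X]

theorem eq_zero_of_X_sub_X_mul_eq_zero {D : MvPowerSeries (Fin 2) R}
    (h : (X 0 - X 1) * D = 0) : D = 0 := by
  have hD : X 0 * shear D = 0 := by rw [← shear_X_sub_X, ← map_mul, h, map_zero]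
  rw [← shearInv_shear D, eq_zero_of_X_mul_eq_zero hD, map_zero]

theorem existsUnique_eq_X_sub_X_mul {H : MvPowerSeries (Fin 2) R}
    (hH : subst ![PowerSeries.X, PowerSeries.X] H = (0 : PowerSeries R)) :
    ∃! P : MvPowerSeries (Fin 2) R, H = (X 0 - X 1) * P := by
  obtain ⟨Q, hQ⟩ := X_zero_dvd_of_subst_zero_X_eq_zero (subst_zero_X_shear H ▸ hH)
  have hHQ : H = (X 0 - X 1) * shearInv Q := by
    rw [← shearInv_shear H, hQ, map_mul, shearInv_X_zero]
  refine ⟨_, hHQ, fun P hP => sub_eq_zero.1 (eq_zero_of_X_sub_X_mul_eq_zero ?_)⟩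
  rw [mul_sub, ← hP, ← hHQ, sub_self]

theorem subst_X_X_subst_X_zero_subst_X_one {χ : PowerSeries R}
    (hχ0 : PowerSeries.constantCoeff χ = 0) (F : MvPowerSeries (Fin 2) R) :
    subst ![PowerSeries.X, PowerSeries.X]
        (subst ![X 0, PowerSeries.subst (X 1 : MvPowerSeries (Fin 2) R) χ] F :
          MvPowerSeries (Fin 2) R)
      = (subst ![PowerSeries.X, χ] F : PowerSeries R) := by
  have hχ1 : constantCoeff (PowerSeries.subst (X 1 : MvPowerSeries (Fin 2) R) χ) = 0 :=
    PowerSeries.constantCoeff_subst_eq_zero (constantCoeff_X 1) χ hχ0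
  have hG : HasSubst ![X 0, PowerSeries.subst (X 1 : MvPowerSeries (Fin 2) R) χ] :=
    hasSubst_of_constantCoeff_zero (Fin.forall_fin_two.2 ⟨constantCoeff_X 0, hχ1⟩)
  have hdiag : HasSubst (![PowerSeries.X, PowerSeries.X] : Fin 2 → PowerSeries R) :=
    HasSubst.X_X
  rw [subst_comp_subst_apply hG hdiag]
  refine congrArg₂ _ (funext (Fin.forall_fin_two.2 ⟨by simp [subst_X hdiag], ?_⟩)) rfl
  rw [Matrix.cons_val_one, Matrix.cons_val_zero, Matrix.cons_val_one, Matrix.cons_val_zero,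
    PowerSeries.subst, subst_comp_subst_apply (PowerSeries.HasSubst.X 1).const hdiag,
    subst_X hdiag]
  exact PowerSeries.X_subst χ

end

theorem stmt_4_general {R : Type*} [CommRing R] (F : MvPowerSeries (Fin 2) R)
    (χ : PowerSeries R)
    (hχ0 : PowerSeries.constantCoeff χ = 0)
    (hχ : subst2 PowerSeries.X χ F = 0) :
    ∃! P : MvPowerSeries (Fin 2) R,
      subst2 (MvPowerSeries.X 0) (subst1 (MvPowerSeries.X 1) χ) F
        = (MvPowerSeries.X 0 - MvPowerSeries.X 1) * P := by
  apply existsUnique_eq_X_sub_X_mul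
  rw [subst1_eq_subst (MvPowerSeries.constantCoeff_X 1),
    subst2_eq_subst (MvPowerSeries.constantCoeff_X 0)
      (PowerSeries.constantCoeff_subst_eq_zero (MvPowerSeries.constantCoeff_X 1) χ hχ0),
    subst_X_X_subst_X_zero_subst_X_one hχ0, ← subst2_eq_subst PowerSeries.constantCoeff_X hχ0,
    hχ]

/-- There is a unique `P(u,v) ∈ R⟦u,v⟧` with `F(u, χ(v)) = (u - v) · P(u,v)`, where `χ` is
the formal inverse of the formal group law `F`. -/
theorem stmt_4 {R : Type*} [CommRing R] (F : MvPowerSeries (Fin 2) R)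
    (hF : IsFormalGroupLaw F) (χ : PowerSeries R)
    (hχ0 : PowerSeries.constantCoeff χ = 0)
    (hχ : subst2 PowerSeries.X χ F = 0) :
    ∃! P : MvPowerSeries (Fin 2) R,
      subst2 (MvPowerSeries.X 0) (subst1 (MvPowerSeries.X 1) χ) F
        = (MvPowerSeries.X 0 - MvPowerSeries.X 1) * P :=
  stmt_4_general F χ hχ0 hχ
end

section
/- Fix an integer r ≥ 1, a commutative ring R, and an index j with 1 ≤ j ≤ r. Let g : ℤ^r → R be a formal Laurent series with supp g ⊆ C and such that every s ∈ supp g has j-th coordinate s_j ≥ 1. Then the family of convolution powers (g^{*m})_{m ≥ 0} is pointwise summable (for each s ∈ ℤ^r only finitely many m have s ∈ supp(g^{*m})), the sum h = ∑_{m≥0} g^{*m} belongs to 𝓛, and (δ_0 − g) * h = δ_0; in particular δ_0 − g is a unit of the convolution ring 𝓛. -/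
/-- The cone `C = {s ∈ ℤ^r : s₁ ≥ 0, s₁+s₂ ≥ 0, …, s₁+⋯+s_r ≥ 0}`. -/
def laurentCone (r : ℕ) : Set (Fin r → ℤ) :=
  {s | ∀ j : Fin r, 0 ≤ ∑ i ∈ Finset.Iic j, s i}

/-- A formal Laurent series `f : ℤ^r → R` belongs to `𝓛` if some translate of its
support lies in the cone `C`. -/
def memL {r : ℕ} {R : Type*} [CommRing R] (f : (Fin r → ℤ) → R) : Prop :=
  ∃ n : Fin r → ℤ, ∀ s, f s ≠ 0 → n + s ∈ laurentCone r

/-- The convolution product of formal Laurent series. -/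
noncomputable def conv {r : ℕ} {R : Type*} [CommRing R]
    (f g : (Fin r → ℤ) → R) : (Fin r → ℤ) → R :=
  fun s => ∑ᶠ x : Fin r → ℤ, f x * g (s - x)

/-- The delta function at `0 ∈ ℤ^r`, the unit for convolution. -/
def deltaZero {r : ℕ} {R : Type*} [CommRing R] : (Fin r → ℤ) → R :=
  fun s => if s = 0 then 1 else 0

/-- Convolution powers `g^{*m}`. -/
noncomputable def convPow {r : ℕ} {R : Type*} [CommRing R]
    (g : (Fin r → ℤ) → R) : ℕ → ((Fin r → ℤ) → R)
  | 0 => deltaZero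
  | m + 1 => conv g (convPow g m)

/-! Every `g^{*m}` is supported in the cone `C` and on `{s | m ≤ s j}`, and `C ∩ (s - C)` is
finite for every `s` (partial sums identify `C` with `ℕ^r`), so all convolutions involved are
finite sums and at a fixed `s` only the powers with `m ≤ s j` survive. Hence near `s` the
series `h = ∑ g^{*m}` agrees with a partial sum `∑_{m<N} g^{*m}` with `N > s j`, and the
telescoping identity `(δ₀ - g) * ∑_{m<N} g^{*m} = δ₀ - g^{*N}` gives `((δ₀ - g) * h) s = δ₀ s`. -/

open Function Pointwise

lemma exists_ne_zero_of_finsum_ne_zero {α M : Type*} [AddCommMonoid M] {f : α → M}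
    (h : ∑ᶠ x, f x ≠ 0) : ∃ x, f x ≠ 0 := by
  by_contra! hf
  exact h (finsum_eq_zero_of_forall_eq_zero hf)

section Cone

variable {r : ℕ}

lemma zero_mem_laurentCone : (0 : Fin r → ℤ) ∈ laurentCone r := fun k => by simp

lemma add_mem_laurentCone {a b : Fin r → ℤ} (ha : a ∈ laurentCone r) (hb : b ∈ laurentCone r) :
    a + b ∈ laurentCone r := fun k => by
  simpa only [Pi.add_apply, Finset.sum_add_distrib] using add_nonneg (ha k) (hb k)

lemma partialSums_injective :
    Injective (fun (x : Fin r → ℤ) (k : Fin r) => ∑ i ∈ Finset.Iic k, x i) := by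
  intro x y hxy
  funext k
  induction k using Fin.strong_induction_on with
  | _ k ih =>
    have hk := congrFun hxy k
    simp only [Finset.Iic_eq_cons_Iio, Finset.sum_cons] at hk
    rw [Finset.sum_congr rfl fun i hi => ih i (Finset.mem_Iio.mp hi)] at hk
    exact add_right_cancel hk

lemma finite_setOf_mem_laurentCone_sub_mem (s : Fin r → ℤ) :
    {x : Fin r → ℤ | x ∈ laurentCone r ∧ s - x ∈ laurentCone r}.Finite := by
  refine Set.Finite.of_finite_image ?_ partialSums_injective.injOn
  refine (Set.Finite.pi fun k => Set.finite_Icc 0 (∑ i ∈ Finset.Iic k, s i)).subset ?_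
  rintro _ ⟨x, ⟨hx, hsx⟩, rfl⟩ k -
  have := hsx k
  simp only [Pi.sub_apply, Finset.sum_sub_distrib, sub_nonneg] at this
  exact ⟨hx k, this⟩

end Cone

section Convolution

variable {r : ℕ} {R : Type*} [CommRing R]

lemma conv_comm (f g : (Fin r → ℤ) → R) : conv f g = conv g f := by
  funext s
  rw [conv, conv, ← finsum_comp_equiv (Equiv.subLeft s)]
  refine finsum_congr fun x => ?_
  simp only [Equiv.subLeft_apply, sub_sub_cancel, mul_comm]

lemma deltaZero_conv (f : (Fin r → ℤ) → R) : conv deltaZero f = f := by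
  funext s
  rw [conv, finsum_eq_single _ 0 fun x hx => by simp [deltaZero, hx]]
  simp [deltaZero]

lemma support_deltaZero : (deltaZero : (Fin r → ℤ) → R).support ⊆ {0} := fun s hs => by
  by_contra h
  exact hs (if_neg h)

lemma support_conv_subset (f g : (Fin r → ℤ) → R) :
    (conv f g).support ⊆ f.support + g.support := fun s hs => by
  obtain ⟨x, hx⟩ := exists_ne_zero_of_finsum_ne_zero hs
  exact ⟨x, left_ne_zero_of_mul hx, s - x, right_ne_zero_of_mul hx, add_sub_cancel x s⟩

variable {f g : (Fin r → ℤ) → R}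

lemma hasFiniteSupport_conv_summand (hf : f.support ⊆ laurentCone r)
    (hg : g.support ⊆ laurentCone r) (s : Fin r → ℤ) :
    HasFiniteSupport fun x => f x * g (s - x) :=
  (finite_setOf_mem_laurentCone_sub_mem s).subset fun _ hx =>
    ⟨hf (left_ne_zero_of_mul hx), hg (right_ne_zero_of_mul hx)⟩

lemma sub_conv {f₁ f₂ : (Fin r → ℤ) → R} (hf₁ : f₁.support ⊆ laurentCone r)
    (hf₂ : f₂.support ⊆ laurentCone r) (hg : g.support ⊆ laurentCone r) :
    conv (f₁ - f₂) g = conv f₁ g - conv f₂ g := by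
  funext s
  simp only [conv, Pi.sub_apply, sub_mul]
  exact finsum_sub_distrib (hasFiniteSupport_conv_summand hf₁ hg s)
    (hasFiniteSupport_conv_summand hf₂ hg s)

lemma conv_finset_sum {ι : Type*} (T : Finset ι) (F : ι → (Fin r → ℤ) → R)
    (hf : f.support ⊆ laurentCone r) (hF : ∀ i ∈ T, (F i).support ⊆ laurentCone r) :
    conv f (∑ i ∈ T, F i) = ∑ i ∈ T, conv f (F i) := by
  funext s
  simp only [conv, Finset.sum_apply, Finset.mul_sum]
  exact finsum_sum_comm T _ fun i hi => hasFiniteSupport_conv_summand hf (hF i hi) s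

end Convolution

section Powers

variable {r : ℕ} {R : Type*} [CommRing R] {g : (Fin r → ℤ) → R}

lemma support_convPow_subset_laurentCone (hg : g.support ⊆ laurentCone r) (m : ℕ) :
    (convPow g m).support ⊆ laurentCone r := by
  induction m with
  | zero => exact support_deltaZero.trans (Set.singleton_subset_iff.mpr zero_mem_laurentCone)
  | succ m ih =>
    exact (support_conv_subset _ _).trans <| Set.add_subset_iff.mpr fun a ha b hb =>
      add_mem_laurentCone (hg ha) (ih hb)

variable {j : Fin r}

lemma le_apply_of_convPow_ne_zero (hg : ∀ s, g s ≠ 0 → 1 ≤ s j) {m : ℕ} {s : Fin r → ℤ}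
    (hs : convPow g m s ≠ 0) : (m : ℤ) ≤ s j := by
  induction m generalizing s with
  | zero => simp [Set.mem_singleton_iff.mp (support_deltaZero hs)]
  | succ m ih =>
    obtain ⟨a, ha, b, hb, rfl⟩ := support_conv_subset _ _ hs
    have := hg a ha
    have := ih hb
    simp only [Pi.add_apply]
    omega

lemma convPow_eq_zero_of_lt (hg : ∀ s, g s ≠ 0 → 1 ≤ s j) {m : ℕ} {s : Fin r → ℤ}
    (hm : s j < m) : convPow g m s = 0 := by
  by_contra hs
  exact hm.not_ge (le_apply_of_convPow_ne_zero hg hs)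

lemma finite_setOf_convPow_ne_zero (hg : ∀ s, g s ≠ 0 → 1 ≤ s j) (s : Fin r → ℤ) :
    {m : ℕ | convPow g m s ≠ 0}.Finite :=
  (Set.finite_Iic (s j).toNat).subset fun m hm => by
    have := le_apply_of_convPow_ne_zero hg hm
    simp only [Set.mem_Iic]
    omega

lemma finsum_convPow_eq_sum_range (hg : ∀ s, g s ≠ 0 → 1 ≤ s j) {N : ℕ} {s : Fin r → ℤ}
    (hN : s j < N) : ∑ᶠ m, convPow g m s = (∑ m ∈ Finset.range N, convPow g m) s := by
  rw [Finset.sum_apply]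
  refine finsum_eq_finsetSum_of_support_subset _ fun m hm => ?_
  have := le_apply_of_convPow_ne_zero hg hm
  simp only [Finset.coe_range, Set.mem_Iio]
  omega

end Powers

section GeometricSeries

variable {r : ℕ} {R : Type*} [CommRing R] {g : (Fin r → ℤ) → R}

lemma conv_deltaZero_sub_sum_range_convPow (hg : g.support ⊆ laurentCone r) (N : ℕ) :
    conv (deltaZero - g) (∑ m ∈ Finset.range N, convPow g m) = deltaZero - convPow g N := by
  have hpow := support_convPow_subset_laurentCone hg
  have hsum : (∑ m ∈ Finset.range N, convPow g m).support ⊆ laurentCone r := fun s hs => by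
    rw [mem_support, Finset.sum_apply] at hs
    obtain ⟨m, -, hm⟩ := Finset.exists_ne_zero_of_sum_ne_zero hs
    exact hpow m hm
  rw [sub_conv (f₁ := deltaZero) (hpow 0) hg hsum, deltaZero_conv,
    conv_finset_sum _ _ hg fun m _ => hpow m, ← Finset.sum_sub_distrib]
  exact Finset.sum_range_sub' (convPow g) N

lemma memL_of_support_subset {f : (Fin r → ℤ) → R} (hf : f.support ⊆ laurentCone r) :
    memL f :=
  ⟨0, fun _ hs => by simpa using hf hs⟩

lemma support_finsum_convPow_subset (hg : g.support ⊆ laurentCone r) :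
    (fun s => ∑ᶠ m, convPow g m s).support ⊆ laurentCone r := fun _ hs =>
  let ⟨m, hm⟩ := exists_ne_zero_of_finsum_ne_zero hs
  support_convPow_subset_laurentCone hg m hm

lemma conv_deltaZero_sub_finsum_convPow {j : Fin r} (hgC : g.support ⊆ laurentCone r)
    (hgj : ∀ s, g s ≠ 0 → 1 ≤ s j) :
    conv (deltaZero - g) (fun s => ∑ᶠ m, convPow g m s) = deltaZero := by
  funext s
  set N := (s j).toNat + 1
  have hN : s j < N := by omega
  -- only the `x` with `x j ≥ 0` contribute, and for those `(s - x) j < N`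
  have htrunc : conv (deltaZero - g) (fun s => ∑ᶠ m, convPow g m s) s =
      conv (deltaZero - g) (∑ m ∈ Finset.range N, convPow g m) s := by
    refine finsum_congr fun x => ?_
    by_cases hx : (deltaZero - g : (Fin r → ℤ) → R) x = 0
    · simp only [hx, zero_mul]
    have hxj : 0 ≤ x j := by
      by_cases hx0 : x = 0
      · simp [hx0]
      · have : g x ≠ 0 := by simpa [deltaZero, hx0] using hx
        linarith [hgj x this]
    exact congrArg _ (finsum_convPow_eq_sum_range hgj (by simp only [Pi.sub_apply]; omega))
  rw [htrunc, conv_deltaZero_sub_sum_range_convPow hgC, Pi.sub_apply,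
    convPow_eq_zero_of_lt hgj hN, sub_zero]

end GeometricSeries

theorem stmt_11_general (r : ℕ) (R : Type*) [CommRing R] (j : Fin r)
    (g : (Fin r → ℤ) → R)
    (hgC : ∀ s, g s ≠ 0 → s ∈ laurentCone r)
    (hgj : ∀ s, g s ≠ 0 → 1 ≤ s j) :
    (∀ s : Fin r → ℤ, {m : ℕ | convPow g m s ≠ 0}.Finite) ∧
    memL (fun s => ∑ᶠ m : ℕ, convPow g m s) ∧
    conv (deltaZero - g) (fun s => ∑ᶠ m : ℕ, convPow g m s) = deltaZero ∧
    (∃ h : (Fin r → ℤ) → R, memL h ∧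
      conv (deltaZero - g) h = deltaZero ∧ conv h (deltaZero - g) = deltaZero) := by
  have hinv := conv_deltaZero_sub_finsum_convPow hgC hgj
  have hmem := memL_of_support_subset (support_finsum_convPow_subset hgC)
  exact ⟨finite_setOf_convPow_ne_zero hgj, hmem, hinv, _, hmem, hinv, by rw [conv_comm, hinv]⟩

/-- If `supp g ⊆ C` and every `s ∈ supp g` has `s j ≥ 1`, then the family of convolution
powers of `g` is pointwise summable, its sum `h = ∑_{m≥0} g^{*m}` lies in `𝓛`, and
`(δ₀ - g) * h = δ₀`; in particular `δ₀ - g` is a unit of the convolution ring `𝓛`. -/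
theorem stmt_11 (r : ℕ) (hr : 1 ≤ r) (R : Type*) [CommRing R] (j : Fin r)
    (g : (Fin r → ℤ) → R)
    (hgC : ∀ s, g s ≠ 0 → s ∈ laurentCone r)
    (hgj : ∀ s, g s ≠ 0 → 1 ≤ s j) :
    (∀ s : Fin r → ℤ, {m : ℕ | convPow g m s ≠ 0}.Finite) ∧
    memL (fun s => ∑ᶠ m : ℕ, convPow g m s) ∧
    conv (deltaZero - g) (fun s => ∑ᶠ m : ℕ, convPow g m s) = deltaZero ∧
    (∃ h : (Fin r → ℤ) → R, memL h ∧
      conv (deltaZero - g) h = deltaZero ∧ conv h (deltaZero - g) = deltaZero) :=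
  stmt_11_general r R j g hgC hgj
end

section
/- Fix an integer k ≥ 0. The map sending a k-Grassmannian element w ∈ W_∞ to the sequence λ(w) defined by λ_i := k − w(k+i) if w(k+i) < 0 and λ_i := #{j : 1 ≤ j ≤ k and w(j) > w(k+i)} if w(k+i) > 0, is a bijection from the set W_∞^{(k)} of all k-Grassmannian elements of W_∞ onto the set 𝒮𝒫^k of all k-strict partitions. -/
/-- `w` is a signed permutation (an element of `W_∞`): a permutation of `ℤ` (fixing `0`,
which is forced) with `w(-i) = -w(i)` for all `i` and `w(i) ≠ i` for only finitely
many `i`. -/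
def IsSignedPerm (w : Equiv.Perm ℤ) : Prop :=
  (∀ i : ℤ, w (-i) = -w i) ∧ {i : ℤ | w i ≠ i}.Finite

/-- `w` is `k`-Grassmannian: `0 < w(1) < ⋯ < w(k)` and `w(k+1) < w(k+2) < ⋯`. -/
def IsKGrassmannian (k : ℕ) (w : Equiv.Perm ℤ) : Prop :=
  (∀ j : ℕ, 1 ≤ j → j ≤ k → 0 < w (j : ℤ)) ∧
  (∀ j : ℕ, 1 ≤ j → j + 1 ≤ k → w (j : ℤ) < w ((j : ℤ) + 1)) ∧
  (∀ i : ℕ, 1 ≤ i → w ((k : ℤ) + (i : ℤ)) < w ((k : ℤ) + (i : ℤ) + 1))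

/-- The sequence `λ` attached to a `k`-Grassmannian signed permutation `w`:
`λ_i = k - w(k+i)` if `w(k+i) < 0`, and `λ_i = #{j : 1 ≤ j ≤ k, w(j) > w(k+i)}`
if `w(k+i) > 0`. -/
def lamOf (k : ℕ) (w : Equiv.Perm ℤ) (i : ℕ) : ℤ :=
  if w ((k : ℤ) + (i : ℤ)) < 0 then (k : ℤ) - w ((k : ℤ) + (i : ℤ))
  else (((Finset.Icc 1 k)).filter fun j : ℕ => w ((k : ℤ) + (i : ℤ)) < w (j : ℤ)).card

/-- The set of `k`-strict partitions, encoded as sequences `μ : ℕ → ℤ` where `μ i` is the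
`(i+1)`-st part: nonnegative, weakly decreasing, finitely many nonzero terms, and
`μ i > k` implies `μ i > μ (i+1)`. -/
def kStrictPartitions (k : ℕ) : Set (ℕ → ℤ) :=
  {μ | (∀ i : ℕ, 0 ≤ μ i) ∧ (∀ i : ℕ, μ (i + 1) ≤ μ i) ∧
    {i : ℕ | μ i ≠ 0}.Finite ∧ (∀ i : ℕ, (k : ℤ) < μ i → μ (i + 1) < μ i)}

/-!
A `k`-Grassmannian signed permutation `w` is determined by its values at positive positions.
Its negative tail entries are exactly the numbers `k - λ_i` for the parts `λ_i > k`; the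
remaining positive integers, the free values, are shared between the increasing head
`w(1) < ⋯ < w(k)` and the increasing positive part of the tail, and `λ_i` at a positive tail
entry counts the head values above it.

Injectivity: by induction on `t`, two such permutations with the same `λ` place the values
below `t` at the same positive positions, since a value `t` at a head position of one and at a
tail position of the other would make their `λ` differ at that tail position.

Surjectivity: given `μ` with `m` parts exceeding `k`, the positive tail entry at position
`k + 1 + n` is the free value of rank `(n - m) + (k - μ n)`, and the head entry at position
`j + 1` the free value of rank `j + #{n ≥ m | μ n ≥ k - j}`; these two families of ranks
interleave and together exhaust `ℕ`.
-/

open Finset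

section OddExtension

def oddExt (g : ℕ → ℤ) (x : ℤ) : ℤ := x.sign * g (x.natAbs - 1)

variable {g : ℕ → ℤ}

lemma oddExt_neg (x : ℤ) : oddExt g (-x) = -oddExt g x := by
  simp [oddExt]

lemma oddExt_natCast {p : ℕ} (hp : 0 < p) : oddExt g p = g (p - 1) := by
  simp [oddExt, Int.sign_natCast_of_ne_zero hp.ne']

lemma oddExt_bijective (hne : ∀ p, g p ≠ 0) (hinj : Function.Injective fun p => (g p).natAbs)
    (hsurj : ∀ t : ℕ, 0 < t → ∃ p, (g p).natAbs = t) : Function.Bijective (oddExt g) := by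
  have hzero (z : ℤ) : oddExt g z = 0 ↔ z = 0 := by simp [oddExt, hne]
  refine ⟨fun x y h => ?_, fun t => ?_⟩
  · by_cases hx : x = 0
    · exact hx.trans ((hzero y).1 (h ▸ (hzero x).2 hx)).symm
    have hy : y ≠ 0 := fun hy => hx ((hzero x).1 (h.trans ((hzero y).2 hy)))
    have habs : x.natAbs = y.natAbs := by
      have h' := congrArg Int.natAbs h
      simp only [oddExt, Int.natAbs_mul, Int.natAbs_sign_of_ne_zero hx,
        Int.natAbs_sign_of_ne_zero hy, one_mul] at h'
      have := hinj h'
      omega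
    have hsign : x.sign = y.sign := mul_right_cancel₀ (hne _) (by simpa [oddExt, habs] using h)
    rw [← Int.sign_mul_natAbs x, ← Int.sign_mul_natAbs y, hsign, habs]
  · rcases eq_or_ne t 0 with rfl | ht
    · exact ⟨0, (hzero 0).2 rfl⟩
    obtain ⟨p, hp⟩ := hsurj t.natAbs (Int.natAbs_pos.2 ht)
    have hval : oddExt g ((p + 1 : ℕ) : ℤ) = g p := oddExt_natCast (Nat.succ_pos p)
    rcases Int.natAbs_eq_natAbs_iff.1 hp with h | h
    · exact ⟨_, hval.trans h⟩
    · exact ⟨-((p + 1 : ℕ) : ℤ), by rw [oddExt_neg, hval, h, neg_neg]⟩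

lemma isSignedPerm_ofBijective (hg : Function.Bijective (oddExt g)) {N : ℕ}
    (hN : ∀ p, N ≤ p → g p = p + 1) : IsSignedPerm (Equiv.ofBijective _ hg) := by
  refine ⟨oddExt_neg, (Set.finite_Icc (-(N : ℤ)) N).subset fun x hx => ?_⟩
  by_contra hxN
  simp only [Set.mem_Icc, not_and_or, not_le] at hxN
  refine hx ?_
  simp only [Equiv.ofBijective_apply]
  rcases hxN with hx | hx
  · lift -x to ℕ using by omega with p hp
    rw [← neg_neg x, oddExt_neg, ← hp, oddExt_natCast (by omega), hN _ (by omega)]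
    omega
  · lift x to ℕ using by omega
    rw [oddExt_natCast (by omega), hN _ (by omega)]
    omega

end OddExtension

section FirstBelow

/-- The first index at which `μ` takes a value below `c`; `0` if there is none. -/
noncomputable def firstBelow (μ : ℕ → ℤ) (c : ℤ) : ℕ := sInf {n | μ n < c}

variable {μ : ℕ → ℤ} {c : ℤ}

lemma firstBelow_spec (hc : ∃ n, μ n < c) : μ (firstBelow μ c) < c := Nat.sInf_mem hc

lemma le_iff_lt_firstBelow (hμ : Antitone μ) (hc : ∃ n, μ n < c) {n : ℕ} :
    c ≤ μ n ↔ n < firstBelow μ c := by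
  refine ⟨fun h => ?_, fun h => not_lt.1 (Nat.notMem_of_lt_sInf h)⟩
  by_contra hn
  exact (hμ (not_lt.1 hn)).not_gt ((firstBelow_spec hc).trans_le h)

lemma firstBelow_le_firstBelow (hc : ∃ n, μ n < c) {c' : ℤ} (h : c ≤ c') :
    firstBelow μ c' ≤ firstBelow μ c :=
  Nat.sInf_le ((firstBelow_spec hc).trans_le h)

lemma firstBelow_eq {n : ℕ} (hn : μ n < c) (hlt : ∀ i < n, c ≤ μ i) : firstBelow μ c = n :=
  le_antisymm (Nat.sInf_le hn) (not_lt.1 fun h => (hlt _ h).not_gt (firstBelow_spec ⟨n, hn⟩))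

end FirstBelow

section GrassmannianPermutations

variable {k : ℕ} {w v : Equiv.Perm ℤ}

lemma IsSignedPerm.map_zero (hw : IsSignedPerm w) : w 0 = 0 := by
  have h := hw.1 0
  rw [neg_zero] at h
  omega

lemma IsSignedPerm.exists_eq_self (hw : IsSignedPerm w) : ∃ N : ℤ, ∀ x, N < x → w x = x := by
  obtain ⟨N, hN⟩ := hw.2.bddAbove
  exact ⟨N, fun x hx => by_contra fun h => (hN h).not_gt hx⟩

lemma IsKGrassmannian.head_pos (hw : IsKGrassmannian k w) {y : ℤ} (h1 : 1 ≤ y) (hk : y ≤ k) :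
    0 < w y := by
  lift y to ℕ using by omega
  exact hw.1 y (by omega) (by omega)

lemma IsKGrassmannian.strictMonoOn_head (hw : IsKGrassmannian k w) :
    StrictMonoOn w (Set.Icc 1 (k : ℤ)) := by
  refine strictMonoOn_of_lt_succ Set.ordConnected_Icc fun a _ ha hsa => ?_
  simp only [Set.mem_Icc, Order.succ_eq_add_one] at ha hsa ⊢
  lift a to ℕ using by omega
  exact hw.2.1 a (by omega) (by omega)

lemma IsKGrassmannian.strictMonoOn_tail (hw : IsKGrassmannian k w) :
    StrictMonoOn w (Set.Ici ((k : ℤ) + 1)) := by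
  refine strictMonoOn_of_lt_succ Set.ordConnected_Ici fun a _ ha _ => ?_
  simp only [Set.mem_Ici, Order.succ_eq_add_one] at ha ⊢
  obtain ⟨i, rfl⟩ : ∃ i : ℕ, a = k + i := ⟨(a - k).toNat, by omega⟩
  exact hw.2.2 i (by omega)

lemma IsKGrassmannian.apply_lt_apply (hw : IsKGrassmannian k w) {y z : ℤ} (hy : 0 < y) (hyz : y < z)
    (hblock : y ≤ k ↔ z ≤ k) : w y < w z := by
  by_cases hz : z ≤ k
  · exact hw.strictMonoOn_head ⟨hy, hblock.2 hz⟩ ⟨by omega, hz⟩ hyz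
  · exact hw.strictMonoOn_tail (show (k : ℤ) + 1 ≤ y by omega) (show (k : ℤ) + 1 ≤ z by omega) hyz

namespace KGrassmannian

/-- The entry of `λ(w)` at a tail position carrying the value `c`. -/
def lamVal (k : ℕ) (w : Equiv.Perm ℤ) (c : ℤ) : ℤ :=
  if c < 0 then (k : ℤ) - c else ((Icc 1 k).filter fun j : ℕ => c < w j).card

lemma lamOf_eq_lamVal (i : ℕ) : lamOf k w i = lamVal k w (w (k + i)) := rfl

lemma lamVal_le_of_nonneg {c : ℤ} (hc : 0 ≤ c) : lamVal k w c ≤ k := by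
  rw [lamVal, if_neg (not_lt.2 hc)]
  exact_mod_cast (card_filter_le _ _).trans (by simp)

lemma lt_lamVal_iff {c : ℤ} : (k : ℤ) < lamVal k w c ↔ c < 0 := by
  by_cases hc : c < 0
  · rw [lamVal, if_pos hc]
    simp only [hc, iff_true]
    omega
  · simpa [hc] using lamVal_le_of_nonneg (w := w) (not_lt.1 hc)

lemma lamVal_nonneg (c : ℤ) : 0 ≤ lamVal k w c := by
  unfold lamVal
  split_ifs <;> omega

lemma lamVal_antitone : Antitone (lamVal k w) := by
  intro c c' h
  by_cases hc' : c' < 0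
  · simp only [lamVal, if_pos hc', if_pos (h.trans_lt hc')]
    omega
  by_cases hc : c < 0
  · exact (lamVal_le_of_nonneg (not_lt.1 hc')).trans (lt_lamVal_iff.2 hc).le
  simp only [lamVal, if_neg hc, if_neg hc']
  exact_mod_cast card_le_card (monotone_filter_right _ fun j _ hj => h.trans_lt hj)

lemma lamVal_lt_of_neg {c c' : ℤ} (hc : c < 0) (h : c < c') : lamVal k w c' < lamVal k w c := by
  by_cases hc' : c' < 0
  · simp only [lamVal, if_pos hc', if_pos hc]
    omega
  · exact (lamVal_le_of_nonneg (not_lt.1 hc')).trans_lt (lt_lamVal_iff.2 hc)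

lemma lamVal_eq_zero {c : ℤ} (hc : 0 ≤ c) (h : ∀ j : ℕ, 1 ≤ j → j ≤ k → w j ≤ c) :
    lamVal k w c = 0 := by
  rw [lamVal, if_neg (not_lt.2 hc)]
  simp only [Nat.cast_eq_zero, card_eq_zero, filter_eq_empty_iff, mem_Icc, not_lt]
  exact fun j hj => h j hj.1 hj.2

theorem lamOf_mem_kStrictPartitions (hw : IsSignedPerm w) (hwg : IsKGrassmannian k w) :
    (fun i : ℕ => lamOf k w (i + 1)) ∈ kStrictPartitions k := by
  have htail (i : ℕ) : w (k + ((i + 1 : ℕ) : ℤ)) < w (k + ((i + 1 + 1 : ℕ) : ℤ)) :=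
    hwg.strictMonoOn_tail (by simp) (by simp; omega) (by push_cast; omega)
  refine ⟨fun i => lamVal_nonneg _, fun i => lamVal_antitone (htail i).le, ?_,
    fun i hi => lamVal_lt_of_neg (lt_lamVal_iff.1 hi) (htail i)⟩
  obtain ⟨N, hN⟩ := hw.exists_eq_self
  have hhead (j : ℕ) (hj : 1 ≤ j) (hjk : j ≤ k) : w j ≤ max N k := by
    by_contra h
    have := w.injective (hN (w j) (by omega))
    omega
  refine (Set.finite_Iio N.toNat).subset fun i hi => ?_
  by_contra hiN
  simp only [Set.mem_Iio, not_lt] at hiN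
  have hfix : w (k + ((i + 1 : ℕ) : ℤ)) = k + ((i + 1 : ℕ) : ℤ) := hN _ (by omega)
  refine hi (lamVal_eq_zero (by omega) fun j hj hjk => ?_)
  have := hhead j hj hjk
  omega

lemma apply_eq_of_apply_neg (hlam : ∀ y : ℤ, (k : ℤ) < y → lamVal k w (w y) = lamVal k v (v y))
    (hwg : IsKGrassmannian k w) {y : ℤ} (hy : 0 < y) (hwy : w y < 0) :
    v y = w y := by
  have hyk : (k : ℤ) < y := by
    by_contra h
    exact (hwg.head_pos hy (not_lt.1 h)).not_gt hwy
  have hvy : v y < 0 := lt_lamVal_iff.1 (hlam y hyk ▸ lt_lamVal_iff.2 hwy)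
  have := hlam y hyk
  simp only [lamVal, if_pos hwy, if_pos hvy] at this
  omega

/-- Otherwise `λ(w)` would count fewer head values above position `q` than `λ(v)` does. -/
lemma not_head_tail (hlam : ∀ y : ℤ, (k : ℤ) < y → lamVal k w (w y) = lamVal k v (v y))
    {t : ℤ} (ht : 0 < t) (hbelow : ∀ y, 0 < y → (w y < t ↔ v y < t)) {p q : ℤ} (hp : 1 ≤ p)
    (hpk : p ≤ k) (hqk : (k : ℤ) < q) (hwp : w p = t) (hvq : v q = t) : False := by
  have hwq : t < w q := by
    refine lt_of_le_of_ne (not_lt.1 fun h => ?_) fun h => ?_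
    · exact ((hbelow q (by omega)).1 h).ne hvq
    · exact (show p ≠ q by omega) (w.injective (hwp.trans h))
  have hv_gt {j : ℤ} (hj : 1 ≤ j) (hjk : j ≤ k) (htj : t ≤ w j) : t < v j :=
    lt_of_le_of_ne (not_lt.1 fun h => (hbelow j (by omega)).2 h |>.not_ge htj)
      fun h => (show j ≠ q by omega) (v.injective (h.symm.trans hvq.symm))
  have hsub :
      ((Icc 1 k).filter fun j : ℕ => w q < w j) ⊂ (Icc 1 k).filter fun j : ℕ => t < v j := by
    rw [ssubset_iff_of_subset (monotone_filter_right _ fun j hj hlt => ?_)]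
    · lift p to ℕ using by omega
      refine ⟨p, mem_filter.2 ⟨mem_Icc.2 ⟨by omega, by omega⟩, hv_gt hp hpk hwp.ge⟩, fun h => ?_⟩
      exact (hwq.trans (mem_filter.1 h).2).ne' hwp
    · have := mem_Icc.1 hj
      exact hv_gt (by omega) (by omega) (hwq.trans hlt).le
  have := hlam q hqk
  rw [hvq, lamVal, lamVal, if_neg (by omega), if_neg (by omega)] at this
  exact (card_lt_card hsub).ne (by exact_mod_cast this)

lemma apply_eq_of_apply_eq (hw : IsSignedPerm w) (hwg : IsKGrassmannian k w)
    (hv : IsSignedPerm v) (hvg : IsKGrassmannian k v)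
    (hlam : ∀ y : ℤ, (k : ℤ) < y → lamVal k w (w y) = lamVal k v (v y))
    {t : ℤ} (ht : 0 < t) (hbelow : ∀ y, 0 < y → (w y < t ↔ v y < t)) {p : ℤ} (hp : 0 < p)
    (hwp : w p = t) : v p = t := by
  have hlam' (y : ℤ) (hy : (k : ℤ) < y) := (hlam y hy).symm
  have hbelow' (y : ℤ) (hy : 0 < y) := (hbelow y hy).symm
  set q := v.symm t
  have hvq : v q = t := v.apply_symm_apply t
  have hq : 0 < q := by
    rcases lt_trichotomy q 0 with hq | hq | hq
    · have h1 : v (-q) = -t := by rw [hv.1, hvq]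
      have h2 := apply_eq_of_apply_neg hlam' hvg (y := -q) (by omega) (by omega)
      have hwq : w q = t := by rw [← neg_neg q, hw.1, h2, h1, neg_neg]
      have := w.injective (hwq.trans hwp.symm)
      omega
    · rw [hq, hv.map_zero] at hvq
      omega
    · exact hq
  suffices q = p from this ▸ hvq
  by_contra hne
  rcases lt_or_gt_of_ne hne with h | h
  · by_cases hblock : q ≤ k ↔ p ≤ k
    · exact ((hbelow q hq).1 (hwp ▸ hwg.apply_lt_apply hq h hblock)).ne hvq
    · exact not_head_tail hlam' ht hbelow' hq (by omega) (by omega) hvq hwp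
  · by_cases hblock : p ≤ k ↔ q ≤ k
    · exact ((hbelow p hp).2 (hvq ▸ hvg.apply_lt_apply hp h hblock)).ne hwp
    · exact not_head_tail hlam ht hbelow hp (by omega) (by omega) hwp hvq

lemma apply_lt_iff_apply_lt (hw : IsSignedPerm w) (hwg : IsKGrassmannian k w)
    (hv : IsSignedPerm v) (hvg : IsKGrassmannian k v)
    (hlam : ∀ y : ℤ, (k : ℤ) < y → lamVal k w (w y) = lamVal k v (v y))
    (t : ℕ) {y : ℤ} (hy : 0 < y) : w y < t ↔ v y < t := by
  have hlam' (y : ℤ) (hy : (k : ℤ) < y) := (hlam y hy).symm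
  induction t generalizing y with
  | zero =>
    refine ⟨fun h => ?_, fun h => ?_⟩
    · rwa [apply_eq_of_apply_neg hlam hwg hy h]
    · rwa [apply_eq_of_apply_neg hlam' hvg hy h]
  | succ t ih =>
    have hw0 : w y ≠ 0 := fun h => by have := w.injective (h.trans hw.map_zero.symm); omega
    have hv0 : v y ≠ 0 := fun h => by have := v.injective (h.trans hv.map_zero.symm); omega
    have heq : w y = t ↔ v y = t := by
      rcases Nat.eq_zero_or_pos t with rfl | ht
      · simp [hw0, hv0]
      · have ht' : (0 : ℤ) < t := by exact_mod_cast ht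
        exact ⟨apply_eq_of_apply_eq hw hwg hv hvg hlam ht' (fun z hz => ih hz) hy,
          apply_eq_of_apply_eq hv hvg hw hwg hlam' ht' (fun z hz => (ih hz).symm) hy⟩
    have := ih hy
    push_cast
    omega

theorem eq_of_lamVal_eq (hw : IsSignedPerm w) (hwg : IsKGrassmannian k w)
    (hv : IsSignedPerm v) (hvg : IsKGrassmannian k v)
    (hlam : ∀ y : ℤ, (k : ℤ) < y → lamVal k w (w y) = lamVal k v (v y)) :
    w = v := by
  have hlam' (y : ℤ) (hy : (k : ℤ) < y) := (hlam y hy).symm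
  have hbelow := apply_lt_iff_apply_lt hw hwg hv hvg hlam
  have hpos {y : ℤ} (hy : 0 < y) : w y = v y := by
    by_cases hwy : w y < 0
    · exact (apply_eq_of_apply_neg hlam hwg hy hwy).symm
    by_cases hvy : v y < 0
    · exact apply_eq_of_apply_neg hlam' hvg hy hvy
    have h1 := (hbelow ((w y).toNat + 1) hy).1 (by push_cast; omega)
    have h2 := (hbelow ((v y).toNat + 1) hy).2 (by push_cast; omega)
    push_cast at h1 h2
    omega
  ext x
  rcases lt_trichotomy x 0 with hx | rfl | hx
  · rw [← neg_neg x, hw.1, hv.1, hpos (neg_pos.2 hx)]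
  · rw [hw.map_zero, hv.map_zero]
  · exact hpos hx

end KGrassmannian

end GrassmannianPermutations

namespace KStrictPartition

variable {k : ℕ} {μ : ℕ → ℤ}

lemma antitone_of_mem (hμ : μ ∈ kStrictPartitions k) : Antitone μ :=
  antitone_nat_of_succ_le hμ.2.1

lemma eventually_eq_zero (hμ : μ ∈ kStrictPartitions k) : ∃ N, ∀ n, N ≤ n → μ n = 0 := by
  obtain ⟨N, hN⟩ := hμ.2.2.1.bddAbove
  exact ⟨N + 1, fun n hn => by_contra fun h => by have := hN h; omega⟩

lemma exists_lt_of_pos (hμ : μ ∈ kStrictPartitions k) {c : ℤ} (hc : 0 < c) : ∃ n, μ n < c := by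
  obtain ⟨N, hN⟩ := eventually_eq_zero hμ
  exact ⟨N, by rw [hN N le_rfl]; exact hc⟩

noncomputable def numPartsGt (k : ℕ) (μ : ℕ → ℤ) : ℕ := firstBelow μ (k + 1)

lemma lt_numPartsGt_iff (hμ : μ ∈ kStrictPartitions k) {n : ℕ} :
    n < numPartsGt k μ ↔ (k : ℤ) < μ n := by
  rw [numPartsGt, ← le_iff_lt_firstBelow (antitone_of_mem hμ) (exists_lt_of_pos hμ (by omega))]
  omega

lemma strictAntiOn_of_mem (hμ : μ ∈ kStrictPartitions k) :
    StrictAntiOn μ (Set.Iio (numPartsGt k μ)) := fun i hi _ _ hij =>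
  (antitone_of_mem hμ hij).trans_lt (hμ.2.2.2 i ((lt_numPartsGt_iff hμ).1 hi))

/-- The absolute values `μ i - k` of the negative entries `k - μ i` of the permutation
attached to `μ`. -/
noncomputable def negParts (k : ℕ) (μ : ℕ → ℤ) : Finset ℕ :=
  (range (numPartsGt k μ)).image fun i => (μ i - k).toNat

lemma mem_negParts (hμ : μ ∈ kStrictPartitions k) {t : ℕ} :
    t ∈ negParts k μ ↔ ∃ i < numPartsGt k μ, (t : ℤ) = μ i - k := by
  simp only [negParts, mem_image, mem_range]
  refine exists_congr fun i => and_congr_right fun hi => ?_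
  have := (lt_numPartsGt_iff hμ).1 hi
  omega

lemma card_negParts (hμ : μ ∈ kStrictPartitions k) : (negParts k μ).card = numPartsGt k μ := by
  rw [negParts, card_image_of_injOn, card_range]
  intro i hi j hj hij
  simp only [coe_range] at hi hj
  have hi' := (lt_numPartsGt_iff hμ).1 hi
  have hj' := (lt_numPartsGt_iff hμ).1 hj
  exact (strictAntiOn_of_mem hμ).injOn hi hj (by simp only at hij; omega)

lemma le_of_mem_negParts (hμ : μ ∈ kStrictPartitions k) {t : ℕ} (ht : t ∈ negParts k μ) :
    0 < t ∧ (t : ℤ) ≤ μ 0 := by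
  obtain ⟨i, hi, hti⟩ := (mem_negParts hμ).1 ht
  have := (lt_numPartsGt_iff hμ).1 hi
  have := antitone_of_mem hμ (Nat.zero_le i)
  omega

/-- The positive values of the permutation attached to `μ` at positive positions. -/
def IsFree (k : ℕ) (μ : ℕ → ℤ) (t : ℕ) : Prop := 0 < t ∧ t ∉ negParts k μ

noncomputable instance : DecidablePred (IsFree k μ) := fun _ => instDecidableAnd

noncomputable def freeEnum (k : ℕ) (μ : ℕ → ℤ) : ℕ → ℕ := Nat.nth (IsFree k μ)

lemma isFree_infinite : (Set.ofPred (IsFree k μ)).Infinite :=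
  Set.infinite_of_forall_exists_gt fun a => ⟨a + (negParts k μ).sup id + 1,
    ⟨by omega, fun h => by have := le_sup (f := id) h; simp only [id] at this; omega⟩, by omega⟩

lemma freeEnum_strictMono : StrictMono (freeEnum k μ) := Nat.nth_strictMono isFree_infinite

lemma isFree_freeEnum (r : ℕ) : IsFree k μ (freeEnum k μ r) :=
  Nat.nth_mem_of_infinite isFree_infinite r

lemma freeEnum_count {t : ℕ} (ht : IsFree k μ t) : freeEnum k μ (Nat.count (IsFree k μ) t) = t :=
  Nat.nth_count ht

lemma freeEnum_eq_of_le (hμ : μ ∈ kStrictPartitions k) {r : ℕ} (hr : (μ 0).toNat ≤ r) :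
    freeEnum k μ r = r + 1 + numPartsGt k μ := by
  have hsub : negParts k μ ⊆ Ico 1 (r + 1 + numPartsGt k μ) := fun t ht => by
    have := le_of_mem_negParts hμ ht
    simp only [mem_Ico]
    omega
  have hcount : Nat.count (IsFree k μ) (r + 1 + numPartsGt k μ) = r := by
    rw [Nat.count_eq_card_filter_range,
      show (range _).filter (IsFree k μ) = Ico 1 (r + 1 + numPartsGt k μ) \ negParts k μ by
        ext t
        simp only [mem_filter, mem_range, IsFree, mem_sdiff, mem_Ico, Nat.one_le_iff_ne_zero,
          Nat.pos_iff_ne_zero]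
        tauto,
      card_sdiff_of_subset hsub, card_negParts hμ, Nat.card_Ico]
    omega
  have hfree : IsFree k μ (r + 1 + numPartsGt k μ) := ⟨by omega, fun h => by
    have := le_of_mem_negParts hμ h
    omega⟩
  simpa only [hcount] using freeEnum_count hfree

/-- The rank among the free values of the value at tail position `k + 1 + n`, for
`numPartsGt k μ ≤ n`: it exceeds `n - numPartsGt k μ` earlier positive tail values and
`k - μ n` head values. -/
noncomputable def tailRank (k : ℕ) (μ : ℕ → ℤ) (n : ℕ) : ℕ := n - numPartsGt k μ + (k - (μ n).toNat)

/-- The rank among the free values of the value at head position `j + 1`, for `j < k`: it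
exceeds the `j` earlier head values and the positive tail values at the indices
`numPartsGt k μ ≤ n < firstBelow μ (k - j)`, those with `μ n ≥ k - j`. -/
noncomputable def headRank (k : ℕ) (μ : ℕ → ℤ) (j : ℕ) : ℕ :=
  j + (firstBelow μ (k - j) - numPartsGt k μ)

lemma le_of_numPartsGt_le (hμ : μ ∈ kStrictPartitions k) {n : ℕ} (hn : numPartsGt k μ ≤ n) :
    0 ≤ μ n ∧ μ n ≤ k :=
  ⟨hμ.1 n, not_lt.1 fun h => (lt_numPartsGt_iff hμ).2 h |>.not_ge hn⟩

lemma tailRank_lt_tailRank (hμ : μ ∈ kStrictPartitions k) {n n' : ℕ} (hn : numPartsGt k μ ≤ n)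
    (h : n < n') : tailRank k μ n < tailRank k μ n' := by
  have := le_of_numPartsGt_le hμ hn
  have := le_of_numPartsGt_le hμ (hn.trans h.le)
  have := antitone_of_mem hμ h.le
  unfold tailRank
  omega

lemma headRank_lt_headRank (hμ : μ ∈ kStrictPartitions k) {j j' : ℕ} (h : j < j') (hj' : j' < k) :
    headRank k μ j < headRank k μ j' := by
  have := firstBelow_le_firstBelow (exists_lt_of_pos hμ (show (0 : ℤ) < k - j' by omega))
    (show (k : ℤ) - j' ≤ k - j by omega)
  unfold headRank
  omega

/-- The tail value at position `k + 1 + n` lies below exactly the last `μ n` head values. -/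
lemma headRank_tailRank_cases (hμ : μ ∈ kStrictPartitions k) {j n : ℕ} (hj : j < k)
    (hn : numPartsGt k μ ≤ n) :
    ((k : ℤ) - j ≤ μ n ∧ tailRank k μ n < headRank k μ j) ∨
      (μ n < (k : ℤ) - j ∧ headRank k μ j < tailRank k μ n) := by
  have hc := exists_lt_of_pos hμ (show (0 : ℤ) < k - j by omega)
  have hiff := le_iff_lt_firstBelow (antitone_of_mem hμ) hc (n := n)
  have := firstBelow_le_firstBelow hc (show (k : ℤ) - j ≤ k + 1 by omega)
  have := le_of_numPartsGt_le hμ hn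
  unfold tailRank headRank numPartsGt at *
  omega

/-- If `n` is the first tail index whose rank is at least `r` and that rank overshoots `r`,
then `r` is a head rank. -/
lemma exists_headRank_or_tailRank_eq (hμ : μ ∈ kStrictPartitions k) (r : ℕ) :
    (∃ j < k, headRank k μ j = r) ∨ ∃ n, numPartsGt k μ ≤ n ∧ tailRank k μ n = r := by
  have hex : ∃ n, numPartsGt k μ ≤ n ∧ r ≤ tailRank k μ n :=
    ⟨numPartsGt k μ + r, by omega, by unfold tailRank; omega⟩
  obtain ⟨n₀, ⟨hm0, hr0⟩, hmin⟩ : ∃ n₀, (numPartsGt k μ ≤ n₀ ∧ r ≤ tailRank k μ n₀) ∧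
      ∀ n < n₀, ¬(numPartsGt k μ ≤ n ∧ r ≤ tailRank k μ n) :=
    ⟨Nat.find hex, Nat.find_spec hex, fun _ => Nat.find_min hex⟩
  rcases hr0.eq_or_lt with h | hlt
  · exact Or.inr ⟨n₀, hm0, h.symm⟩
  have hμn₀ := le_of_numPartsGt_le hμ hm0
  have hprev : n₀ = numPartsGt k μ ∨ numPartsGt k μ < n₀ ∧ n₀ ≤ r + numPartsGt k μ ∧
      (k : ℤ) - (r + numPartsGt k μ - n₀ : ℕ) ≤ μ (n₀ - 1) := by
    refine hm0.eq_or_lt.imp Eq.symm fun h => ⟨h, ?_⟩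
    have h1 := hmin (n₀ - 1) (by omega)
    have h2 := le_of_numPartsGt_le hμ (show numPartsGt k μ ≤ n₀ - 1 by omega)
    unfold tailRank at h1 hlt
    omega
  unfold tailRank at hlt
  have hfb : firstBelow μ (k - (r + numPartsGt k μ - n₀ : ℕ)) = n₀ := by
    refine firstBelow_eq (by omega) fun i hi => ?_
    by_cases him : i < numPartsGt k μ
    · have := (lt_numPartsGt_iff hμ).1 him
      omega
    · have := antitone_of_mem hμ (show i ≤ n₀ - 1 by omega)
      omega
  refine Or.inl ⟨r + numPartsGt k μ - n₀, by omega, ?_⟩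
  rw [headRank, hfb]
  omega

/-- The rank among the free values of the value at a position `p + 1` outside the negative
block `k < p + 1 ≤ k + numPartsGt k μ`. -/
noncomputable def posRank (k : ℕ) (μ : ℕ → ℤ) (p : ℕ) : ℕ :=
  if p < k then headRank k μ p else tailRank k μ (p - k)

/-- The value at position `p + 1` of the `k`-Grassmannian permutation with partition `μ`. -/
noncomputable def posValue (k : ℕ) (μ : ℕ → ℤ) (p : ℕ) : ℤ :=
  if k ≤ p ∧ p < k + numPartsGt k μ then k - μ (p - k) else freeEnum k μ (posRank k μ p)

lemma posValue_of_lt {p : ℕ} (hp : p < k) : posValue k μ p = freeEnum k μ (headRank k μ p) := by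
  rw [posValue, if_neg (by omega), posRank, if_pos hp]

lemma posValue_of_neg_block {p : ℕ} (hp : k ≤ p) (hpm : p < k + numPartsGt k μ) :
    posValue k μ p = k - μ (p - k) := by
  rw [posValue, if_pos ⟨hp, hpm⟩]

lemma posValue_of_le {p : ℕ} (hp : k + numPartsGt k μ ≤ p) :
    posValue k μ p = freeEnum k μ (tailRank k μ (p - k)) := by
  rw [posValue, if_neg (by omega), posRank, if_neg (by omega)]

lemma posRank_injOn (hμ : μ ∈ kStrictPartitions k) :
    Set.InjOn (posRank k μ) {p | ¬(k ≤ p ∧ p < k + numPartsGt k μ)} := by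
  intro a ha b hb h
  by_contra hne
  wlog hab : a < b generalizing a b
  · exact this hb ha h.symm (Ne.symm hne) (by omega)
  simp only [Set.mem_ofPred_eq, not_and, not_lt] at ha hb
  unfold posRank at h
  by_cases hbk : b < k
  · rw [if_pos (hab.trans hbk), if_pos hbk] at h
    exact (headRank_lt_headRank hμ hab hbk).ne h
  by_cases hak : a < k
  · rw [if_pos hak, if_neg hbk] at h
    have := headRank_tailRank_cases hμ hak (n := b - k) (by omega)
    omega
  · rw [if_neg hak, if_neg hbk] at h
    exact (tailRank_lt_tailRank hμ (by omega) (show a - k < b - k by omega)).ne h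

lemma natAbs_posValue_mem_negParts_iff (hμ : μ ∈ kStrictPartitions k) {p : ℕ} :
    (posValue k μ p).natAbs ∈ negParts k μ ↔ k ≤ p ∧ p < k + numPartsGt k μ := by
  by_cases hp : k ≤ p ∧ p < k + numPartsGt k μ
  · have := (lt_numPartsGt_iff hμ).1 (show p - k < numPartsGt k μ by omega)
    rw [posValue_of_neg_block hp.1 hp.2, mem_negParts hμ]
    exact iff_of_true ⟨p - k, by omega, by omega⟩ hp
  · rw [posValue, if_neg hp, Int.natAbs_natCast]
    exact iff_of_false (isFree_freeEnum _).2 hp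

lemma posValue_ne_zero (hμ : μ ∈ kStrictPartitions k) (p : ℕ) : posValue k μ p ≠ 0 := by
  unfold posValue
  split_ifs with hp
  · have := (lt_numPartsGt_iff hμ).1 (show p - k < numPartsGt k μ by omega)
    omega
  · exact_mod_cast (isFree_freeEnum _).1.ne'

lemma natAbs_posValue_injective (hμ : μ ∈ kStrictPartitions k) :
    Function.Injective fun p => (posValue k μ p).natAbs := by
  intro a b h
  simp only at h
  have hblock : k ≤ a ∧ a < k + numPartsGt k μ ↔ k ≤ b ∧ b < k + numPartsGt k μ := by
    rw [← natAbs_posValue_mem_negParts_iff hμ, ← natAbs_posValue_mem_negParts_iff hμ, h]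
  by_cases ha : k ≤ a ∧ a < k + numPartsGt k μ
  · have hb := hblock.1 ha
    rw [posValue_of_neg_block ha.1 ha.2, posValue_of_neg_block hb.1 hb.2] at h
    have := (lt_numPartsGt_iff hμ).1 (show a - k < numPartsGt k μ by omega)
    have := (lt_numPartsGt_iff hμ).1 (show b - k < numPartsGt k μ by omega)
    have := (strictAntiOn_of_mem hμ).injOn (show a - k < numPartsGt k μ by omega)
      (show b - k < numPartsGt k μ by omega) (by omega)
    omega
  · have hb := mt hblock.2 ha
    simp only [posValue, if_neg ha, if_neg hb, Int.natAbs_natCast] at h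
    exact posRank_injOn hμ ha hb (freeEnum_strictMono.injective h)

lemma exists_natAbs_posValue_eq (hμ : μ ∈ kStrictPartitions k) {t : ℕ} (ht : 0 < t) :
    ∃ p, (posValue k μ p).natAbs = t := by
  by_cases hneg : t ∈ negParts k μ
  · obtain ⟨i, hi, hti⟩ := (mem_negParts hμ).1 hneg
    refine ⟨k + i, ?_⟩
    rw [posValue_of_neg_block (by omega) (by omega), Nat.add_sub_cancel_left]
    omega
  obtain ⟨p, hp, hrank⟩ : ∃ p, ¬(k ≤ p ∧ p < k + numPartsGt k μ) ∧
      posRank k μ p = Nat.count (IsFree k μ) t := by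
    rcases exists_headRank_or_tailRank_eq hμ (Nat.count (IsFree k μ) t) with ⟨j, hj, h⟩ | ⟨n, hn, h⟩
    · exact ⟨j, by omega, by rw [posRank, if_pos hj, h]⟩
    · exact ⟨k + n, by omega, by rw [posRank, if_neg (by omega), Nat.add_sub_cancel_left, h]⟩
  refine ⟨p, ?_⟩
  rw [posValue, if_neg hp, hrank, freeEnum_count ⟨ht, hneg⟩, Int.natAbs_natCast]

lemma posValue_eventually (hμ : μ ∈ kStrictPartitions k) :
    ∃ N, ∀ p, N ≤ p → posValue k μ p = p + 1 := by
  obtain ⟨N, hN⟩ := eventually_eq_zero hμ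
  refine ⟨k + N + numPartsGt k μ + (μ 0).toNat, fun p hp => ?_⟩
  have hμp := hN (p - k) (by omega)
  rw [posValue_of_le (by omega), tailRank, hμp, freeEnum_eq_of_le hμ (by omega)]
  push_cast
  omega

lemma posValue_pos {p : ℕ} (hp : p < k) : 0 < posValue k μ p := by
  rw [posValue_of_lt hp]
  exact_mod_cast (isFree_freeEnum _).1

lemma posValue_lt_posValue (hμ : μ ∈ kStrictPartitions k) {p p' : ℕ} (h : p < p') (hp' : p' < k) :
    posValue k μ p < posValue k μ p' := by
  rw [posValue_of_lt (h.trans hp'), posValue_of_lt hp']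
  exact_mod_cast freeEnum_strictMono (headRank_lt_headRank hμ h hp')

lemma posValue_lt_posValue_succ (hμ : μ ∈ kStrictPartitions k) {p : ℕ} (hp : k ≤ p) :
    posValue k μ p < posValue k μ (p + 1) := by
  by_cases hpm : p + 1 < k + numPartsGt k μ
  · rw [posValue_of_neg_block hp (by omega), posValue_of_neg_block (by omega) hpm]
    have := strictAntiOn_of_mem hμ (show p - k < numPartsGt k μ by omega)
      (show p + 1 - k < numPartsGt k μ by omega) (by omega)
    omega
  rw [posValue_of_le (p := p + 1) (by omega)]
  by_cases hpm' : p < k + numPartsGt k μ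
  · rw [posValue_of_neg_block hp hpm']
    have := (lt_numPartsGt_iff hμ).1 (show p - k < numPartsGt k μ by omega)
    omega
  · rw [posValue_of_le (by omega)]
    exact_mod_cast freeEnum_strictMono (tailRank_lt_tailRank hμ (by omega) (by omega))

lemma lamVal_posValue (hμ : μ ∈ kStrictPartitions k) {w : Equiv.Perm ℤ}
    (hw : ∀ p : ℕ, w ((p : ℤ) + 1) = posValue k μ p) (n : ℕ) :
    KGrassmannian.lamVal k w (posValue k μ (k + n)) = μ n := by
  by_cases hn : n < numPartsGt k μ
  · have := (lt_numPartsGt_iff hμ).1 hn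
    rw [posValue_of_neg_block (by omega) (by omega), KGrassmannian.lamVal, if_pos (by simp; omega)]
    simp
  have hμn := le_of_numPartsGt_le hμ (not_lt.1 hn)
  rw [posValue_of_le (by omega), Nat.add_sub_cancel_left, KGrassmannian.lamVal, if_neg (by simp)]
  have hfilter : (Icc 1 k).filter (fun j : ℕ => (freeEnum k μ (tailRank k μ n) : ℤ) < w j) =
      Icc (k + 1 - (μ n).toNat) k := by
    ext j
    simp only [mem_filter, mem_Icc]
    by_cases hj : 1 ≤ j ∧ j ≤ k
    · have hwj : w j = freeEnum k μ (headRank k μ (j - 1)) := by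
        rw [show (j : ℤ) = ((j - 1 : ℕ) : ℤ) + 1 by omega, hw, posValue_of_lt (by omega)]
      rw [hwj, Nat.cast_lt, freeEnum_strictMono.lt_iff_lt]
      rcases headRank_tailRank_cases hμ (j := j - 1) (n := n) (by omega) (by omega) with h | h <;>
        omega
    · exact iff_of_false (fun h => hj h.1) (by omega)
  rw [hfilter, Nat.card_Icc]
  omega

theorem exists_lamOf_eq (hμ : μ ∈ kStrictPartitions k) :
    ∃ w, IsSignedPerm w ∧ IsKGrassmannian k w ∧ (fun i : ℕ => lamOf k w (i + 1)) = μ := by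
  have hbij := oddExt_bijective (posValue_ne_zero hμ) (natAbs_posValue_injective hμ)
    fun _ => exists_natAbs_posValue_eq hμ
  obtain ⟨N, hN⟩ := posValue_eventually hμ
  set w := Equiv.ofBijective _ hbij
  have hw (p : ℕ) : w ((p : ℤ) + 1) = posValue k μ p := by
    simpa [w] using oddExt_natCast (g := posValue k μ) (Nat.succ_pos p)
  refine ⟨w, isSignedPerm_ofBijective hbij hN, ⟨fun j hj hjk => ?_, fun j hj hjk => ?_,
    fun i hi => ?_⟩, funext fun i => ?_⟩
  · obtain ⟨p, rfl⟩ : ∃ p, j = p + 1 := ⟨j - 1, by omega⟩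
    rw [Nat.cast_succ, hw]
    exact posValue_pos (by omega)
  · obtain ⟨p, rfl⟩ : ∃ p, j = p + 1 := ⟨j - 1, by omega⟩
    rw [Nat.cast_succ, hw, ← Nat.cast_succ, hw]
    exact posValue_lt_posValue hμ (by omega) (by omega)
  · obtain ⟨p, rfl⟩ : ∃ p, i = p + 1 := ⟨i - 1, by omega⟩
    rw [show (k : ℤ) + ((p + 1 : ℕ) : ℤ) = ((k + p : ℕ) : ℤ) + 1 by push_cast; ring, hw,
      show ((k + p : ℕ) : ℤ) + 1 + 1 = ((k + p + 1 : ℕ) : ℤ) + 1 by push_cast; ring, hw]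
    exact posValue_lt_posValue_succ hμ (by omega)
  · rw [KGrassmannian.lamOf_eq_lamVal,
      show (k : ℤ) + ((i + 1 : ℕ) : ℤ) = ((k + i : ℕ) : ℤ) + 1 by push_cast; ring, hw]
    exact lamVal_posValue hμ hw i

end KStrictPartition

/-- The map `w ↦ λ(w)` is a bijection from the set `W_∞^{(k)}` of `k`-Grassmannian signed
permutations onto the set `𝒮𝒫^k` of `k`-strict partitions. -/
theorem stmt_13 (k : ℕ) :
    Set.BijOn (fun w : Equiv.Perm ℤ => fun i : ℕ => lamOf k w (i + 1))
      {w : Equiv.Perm ℤ | IsSignedPerm w ∧ IsKGrassmannian k w}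
      (kStrictPartitions k) := by
  refine ⟨fun w hw => KGrassmannian.lamOf_mem_kStrictPartitions hw.1 hw.2,
    fun w hw v hv h => KGrassmannian.eq_of_lamVal_eq hw.1 hw.2 hv.1 hv.2 fun y hy => ?_,
    fun μ hμ => ?_⟩
  · obtain ⟨i, rfl⟩ : ∃ i : ℕ, y = k + ((i + 1 : ℕ) : ℤ) := ⟨(y - k - 1).toNat, by omega⟩
    exact congrFun h i
  · obtain ⟨w, hw, hwg, hlam⟩ := KStrictPartition.exists_lamOf_eq hμ
    exact ⟨w, ⟨hw, hwg⟩, hlam⟩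
end
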